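/- Fix d > 1. Every sequence λ_n → ∞ of positive reals admits a subsequence λ_{n_k} along which the extended fixed points f_{λ_{n_k}} converge uniformly on ℝ to some continuous non-increasing function f : ℝ → [0,1], and any such sub-sequential limit solves the un-truncated cavity equation f(x) = exp(-d ∫_{-x}^{∞} (x+y)^{d-1} f(y) dy) for all x ∈ ℝ. -/

import Mathlib

open MeasureTheory Set Filter

/-- The truncated cavity operator `T`. -/
noncomputable def T (d lam : ℝ) (f : ℝ → ℝ) : ℝ → ℝ :=
  fun x => Real.exp (-(d * ∫ y in (-x)..lam, (x + y) ^ (d - 1) * f y))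

/-- `f` is the fixed point of the truncated cavity operator on `[-λ, λ]`
(non-increasing and `[0,1]`-valued there), extended to `ℝ` by `1` on `(-∞, -λ]`
and `0` on `(λ, ∞)`. -/
def ExtFixedPoint (d lam : ℝ) (f : ℝ → ℝ) : Prop :=
  AntitoneOn f (Icc (-lam) lam) ∧
  (∀ x ∈ Icc (-lam) lam, f x ∈ Icc (0 : ℝ) 1) ∧
  (∀ x ≤ -lam, f x = 1) ∧ (∀ x > lam, f x = 0) ∧
  (∀ x ∈ Icc (-lam) lam, T d lam f x = f x)

/-- `f : ℝ → [0,1]` is a measurable solution of the un-truncated Mézard–Parisi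
cavity equation `f(x) = exp(-d ∫_{-x}^∞ (x+y)^{d-1} f(y) dy)`, the integrals
being (finite and) well-defined. -/
def SolvesCavity (d : ℝ) (f : ℝ → ℝ) : Prop :=
  Measurable f ∧ (∀ x : ℝ, f x ∈ Icc (0 : ℝ) 1) ∧
  (∀ x : ℝ, IntegrableOn (fun y => (x + y) ^ (d - 1) * f y) (Ioi (-x))) ∧
  (∀ x : ℝ, f x = Real.exp (-(d * ∫ y in Ioi (-x), (x + y) ^ (d - 1) * f y)))

/-!
Every fixed point `f_λ` is non-increasing with `f_λ 0 ≥ e⁻¹`, and splitting its fixed-point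
integral at `0` gives `f_λ t ≤ f_λ 0 * exp (-f_λ 0 * t ^ d)` for `t ≥ 0`. Hence all `f_λ` lie
below the envelope `exp (-e⁻¹ * max t 0 ^ d)`, which makes dominated convergence available for
the cavity integrals uniformly in `λ`.

By Helly's selection principle a subsequence converges almost everywhere to a non-increasing `G`;
dominated convergence in the fixed-point equation then gives convergence everywhere to the
continuous function `exp (-d ∫_{-x}^∞ (x+y)^{d-1} G(y) dy)`, which tends to `1` at `-∞` and to `0`
at `+∞`, so Pólya's theorem makes the convergence uniform. Along any subsequence converging
pointwise, passing to the limit in the fixed-point equation shows that the limit solves the cavity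
equation.
-/

section

open Real Topology

noncomputable def cavityIntegral (d : ℝ) (f : ℝ → ℝ) (x : ℝ) : ℝ :=
  ∫ t in Ioi (-x), (x + t) ^ (d - 1) * f t

noncomputable def cavityMap (d : ℝ) (f : ℝ → ℝ) (x : ℝ) : ℝ :=
  exp (-(d * cavityIntegral d f x))

noncomputable def cavityEnvelope (d t : ℝ) : ℝ :=
  exp (-exp (-1) * max t 0 ^ d)

variable {d : ℝ} {f : ℝ → ℝ}

lemma continuous_add_rpow (hd : 1 ≤ d) (x : ℝ) : Continuous fun t : ℝ => (x + t) ^ (d - 1) :=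
  (Real.continuous_rpow_const (by linarith)).comp (continuous_const_add x)

lemma cavityEnvelope_of_nonpos (hd : 0 < d) {t : ℝ} (ht : t ≤ 0) : cavityEnvelope d t = 1 := by
  simp [cavityEnvelope, max_eq_right ht, zero_rpow hd.ne']

lemma cavityEnvelope_of_nonneg {t : ℝ} (ht : 0 ≤ t) :
    cavityEnvelope d t = exp (-exp (-1) * t ^ d) := by
  rw [cavityEnvelope, max_eq_left ht]

lemma cavityEnvelope_pos (t : ℝ) : 0 < cavityEnvelope d t := exp_pos _

lemma cavityEnvelope_le_one (t : ℝ) : cavityEnvelope d t ≤ 1 := by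
  rw [cavityEnvelope, exp_le_one_iff, neg_mul, neg_nonpos]
  exact mul_nonneg (exp_pos _).le (rpow_nonneg (le_max_right _ _) _)

lemma antitone_cavityEnvelope (hd : 0 ≤ d) : Antitone (cavityEnvelope d) := by
  intro s t hst
  simp only [cavityEnvelope, neg_mul, exp_le_exp, neg_le_neg_iff]
  gcongr

lemma continuous_cavityEnvelope (hd : 0 ≤ d) : Continuous (cavityEnvelope d) :=
  (continuous_const.mul ((Real.continuous_rpow_const hd).comp
    (continuous_id.max continuous_const))).rexp

lemma tendsto_cavityEnvelope_atTop (hd : 0 < d) : Tendsto (cavityEnvelope d) atTop (𝓝 0) := by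
  refine (tendsto_exp_atBot.comp (f := fun t => -exp (-1) * t ^ d) ?_).congr' ?_
  · exact (tendsto_rpow_atTop hd).const_mul_atTop_of_neg (by simpa using exp_pos (-1))
  · filter_upwards [eventually_ge_atTop 0] with t ht
    simp [cavityEnvelope_of_nonneg ht]

lemma integrableOn_rpow_mul_cavityEnvelope (hd : 0 < d) :
    IntegrableOn (fun t => t ^ (d - 1) * cavityEnvelope d t) (Ioi 0) :=
  (integrableOn_rpow_mul_exp_neg_mul_rpow (s := d - 1) (by linarith) hd (exp_pos (-1))).congr_fun
    (fun t ht => by rw [cavityEnvelope_of_nonneg (le_of_lt ht)]) measurableSet_Ioi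

lemma integrableOn_kernel_mul_cavityEnvelope (hd : 1 ≤ d) (x : ℝ) :
    IntegrableOn (fun t => (x + t) ^ (d - 1) * cavityEnvelope d t) (Ioi (-x)) := by
  have hcont : Continuous fun t => (x + t) ^ (d - 1) * cavityEnvelope d t :=
    (continuous_add_rpow hd x).mul (continuous_cavityEnvelope (by linarith))
  have hxa : -x ≤ |x| + 1 := by linarith [neg_abs_le x]
  rw [← Ioc_union_Ioi_eq_Ioi hxa]
  refine hcont.integrableOn_Ioc.union ?_
  refine (((integrableOn_rpow_mul_cavityEnvelope (by linarith : (0:ℝ) < d)).mono_set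
    (Ioi_subset_Ioi (by positivity))).const_mul ((|x| + 1) ^ (d - 1))).mono'
    hcont.aestronglyMeasurable
    (ae_restrict_of_forall_mem measurableSet_Ioi fun t (ht : |x| + 1 < t) => ?_)
  have hxt : 0 ≤ x + t := by linarith [neg_abs_le x]
  have hkernel : x + t ≤ (|x| + 1) * t := by nlinarith [le_abs_self x, abs_nonneg x]
  rw [Real.norm_of_nonneg (mul_nonneg (rpow_nonneg hxt _) (cavityEnvelope_pos t).le), ← mul_assoc,
    ← mul_rpow (by positivity) (by linarith [abs_nonneg x])]
  gcongr
  exact (cavityEnvelope_pos t).le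

lemma norm_kernel_mul_le (hf : ∀ t, f t ∈ Icc 0 (cavityEnvelope d t)) {x t : ℝ}
    (ht : t ∈ Ioi (-x)) :
    ‖(x + t) ^ (d - 1) * f t‖ ≤ (x + t) ^ (d - 1) * cavityEnvelope d t := by
  have hxt : 0 ≤ x + t := by linarith [mem_Ioi.1 ht]
  rw [Real.norm_of_nonneg (mul_nonneg (rpow_nonneg hxt _) (hf t).1)]
  exact mul_le_mul_of_nonneg_left (hf t).2 (rpow_nonneg hxt _)

lemma integrableOn_kernel_mul (hd : 1 ≤ d) (hfm : Measurable f)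
    (hf : ∀ t, f t ∈ Icc 0 (cavityEnvelope d t)) (x : ℝ) :
    IntegrableOn (fun t => (x + t) ^ (d - 1) * f t) (Ioi (-x)) :=
  (integrableOn_kernel_mul_cavityEnvelope hd x).mono'
    ((continuous_add_rpow hd x).measurable.mul hfm).aestronglyMeasurable
    (ae_restrict_of_forall_mem measurableSet_Ioi fun _ => norm_kernel_mul_le hf)

lemma tendsto_cavityIntegral {ι : Type*} {l : Filter ι} [l.IsCountablyGenerated]
    {G : ι → ℝ → ℝ} (hd : 1 ≤ d) (hGm : ∀ i, Measurable (G i))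
    (hG : ∀ i t, G i t ∈ Icc 0 (cavityEnvelope d t)) {x : ℝ}
    (hlim : ∀ᵐ t, Tendsto (fun i => G i t) l (𝓝 (f t))) :
    Tendsto (fun i => cavityIntegral d (G i) x) l (𝓝 (cavityIntegral d f x)) :=
  tendsto_integral_filter_of_dominated_convergence _
    (Eventually.of_forall fun i =>
      ((continuous_add_rpow hd x).measurable.mul (hGm i)).aestronglyMeasurable)
    (Eventually.of_forall fun i =>
      ae_restrict_of_forall_mem measurableSet_Ioi fun _ => norm_kernel_mul_le (hG i))
    (integrableOn_kernel_mul_cavityEnvelope hd x)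
    (ae_restrict_of_ae (hlim.mono fun _ ht => ht.const_mul _))

lemma max_add_rpow_mul_eq_indicator (hd : 1 < d) (f : ℝ → ℝ) (x : ℝ) :
    (fun t => max (x + t) 0 ^ (d - 1) * f t) =
      (Ioi (-x)).indicator fun t => (x + t) ^ (d - 1) * f t := by
  ext t
  by_cases ht : t ∈ Ioi (-x)
  · rw [indicator_of_mem ht, max_eq_left (by linarith [mem_Ioi.1 ht])]
  · rw [indicator_of_notMem ht, max_eq_right (by linarith [not_lt.1 (mem_Ioi.not.1 ht)]),
      zero_rpow (by linarith), zero_mul]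

lemma continuous_cavityIntegral (hd : 1 < d) (hfm : Measurable f)
    (hf : ∀ t, f t ∈ Icc 0 (cavityEnvelope d t)) : Continuous (cavityIntegral d f) := by
  have hkernel : Continuous fun p : ℝ × ℝ => max (p.1 + p.2) 0 ^ (d - 1) :=
    (Real.continuous_rpow_const (by linarith)).comp
      ((continuous_fst.add continuous_snd).max continuous_const)
  -- extending the kernel by `0` removes the moving endpoint `-x` from the domain of integration
  have heq : cavityIntegral d f = fun x => ∫ t, max (x + t) 0 ^ (d - 1) * f t := by
    ext x
    rw [max_add_rpow_mul_eq_indicator hd, integral_indicator measurableSet_Ioi, cavityIntegral]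
  rw [heq, continuous_iff_continuousAt]
  intro x₀
  refine continuousAt_of_dominated
    (bound := fun t => max (x₀ + 1 + t) 0 ^ (d - 1) * cavityEnvelope d t)
    (Eventually.of_forall fun x =>
      ((hkernel.comp (Continuous.prodMk_right x)).measurable.mul hfm).aestronglyMeasurable)
    ?_ ?_ (Eventually.of_forall fun t =>
      ((hkernel.comp (Continuous.prodMk_left t)).mul continuous_const).continuousAt)
  · filter_upwards [Iio_mem_nhds (lt_add_one x₀)] with x (hx : x < x₀ + 1)
    refine Eventually.of_forall fun t => ?_
    rw [Real.norm_of_nonneg (mul_nonneg (rpow_nonneg (le_max_right _ _) _) (hf t).1)]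
    exact mul_le_mul (rpow_le_rpow (le_max_right _ _) (max_le_max_right 0 (by linarith))
      (by linarith)) (hf t).2 (hf t).1 (rpow_nonneg (le_max_right _ _) _)
  · rw [max_add_rpow_mul_eq_indicator hd, integrable_indicator_iff measurableSet_Ioi]
    exact integrableOn_kernel_mul_cavityEnvelope hd.le _

lemma continuous_cavityMap (hd : 1 < d) (hfm : Measurable f)
    (hf : ∀ t, f t ∈ Icc 0 (cavityEnvelope d t)) : Continuous (cavityMap d f) :=
  ((continuous_cavityIntegral hd hfm hf).const_mul d).neg.rexp

lemma tendsto_cavityMap_atBot (hd : 1 < d) (hfm : Measurable f)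
    (hf : ∀ t, f t ∈ Icc 0 (cavityEnvelope d t)) : Tendsto (cavityMap d f) atBot (𝓝 1) := by
  have htail : Tendsto (fun x => ∫ t in Ioi (-x), t ^ (d - 1) * cavityEnvelope d t) atBot (𝓝 0) :=
    tendsto_integral_Ioi_zero tendsto_neg_atBot_atTop
  have hI : Tendsto (cavityIntegral d f) atBot (𝓝 0) := by
    refine tendsto_of_tendsto_of_tendsto_of_le_of_le' tendsto_const_nhds htail ?_ ?_
    · exact Eventually.of_forall fun x => setIntegral_nonneg measurableSet_Ioi fun t ht =>
        mul_nonneg (rpow_nonneg (by linarith [mem_Ioi.1 ht]) _) (hf t).1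
    · filter_upwards [eventually_le_atBot 0] with x hx
      refine setIntegral_mono_on (integrableOn_kernel_mul hd.le hfm hf x)
        ((integrableOn_rpow_mul_cavityEnvelope (by linarith)).mono_set
          (Ioi_subset_Ioi (by linarith))) measurableSet_Ioi fun t ht => ?_
      have hxt : 0 ≤ x + t := by linarith [mem_Ioi.1 ht]
      exact mul_le_mul (rpow_le_rpow hxt (by linarith) (by linarith)) (hf t).2 (hf t).1
        (rpow_nonneg (by linarith) _)
  show Tendsto (fun x => exp (-(d * cavityIntegral d f x))) atBot (𝓝 1)
  simpa using (hI.const_mul d).neg.rexp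

lemma hasDerivAt_exp_neg_mul_rpow (hd : 1 ≤ d) (b t : ℝ) :
    HasDerivAt (fun s => exp (-b * s ^ d)) (-(b * d) * t ^ (d - 1) * exp (-b * t ^ d)) t := by
  convert ((hasDerivAt_rpow_const (Or.inr hd)).const_mul (-b)).exp using 1
  ring

lemma integral_add_rpow (hd : 0 < d) (t : ℝ) :
    ∫ s in (-t)..0, (t + s) ^ (d - 1) = t ^ d / d := by
  rw [intervalIntegral.integral_comp_add_left (fun s => s ^ (d - 1)),
    integral_rpow (Or.inl (by linarith))]
  simp [zero_rpow hd.ne']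

namespace ExtFixedPoint

variable {lam : ℝ}

lemma mem_Icc (h : ExtFixedPoint d lam f) (x : ℝ) : f x ∈ Icc 0 1 := by
  obtain ⟨-, hmem, hleft, hright, -⟩ := h
  rcases le_or_gt x (-lam) with hx | hx
  · simp [hleft x hx]
  rcases le_or_gt x lam with hx' | hx'
  · exact hmem x ⟨hx.le, hx'⟩
  · simp [hright x hx']

protected lemma antitone (h : ExtFixedPoint d lam f) : Antitone f := by
  intro x y hxy
  rcases le_or_gt x (-lam) with hx | hx
  · rw [h.2.2.1 x hx]
    exact (h.mem_Icc y).2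
  rcases le_or_gt y lam with hy | hy
  · exact h.1 ⟨hx.le, hxy.trans hy⟩ ⟨hx.le.trans hxy, hy⟩ hxy
  · rw [h.2.2.2.1 y hy]
    exact (h.mem_Icc x).1

lemma lam_nonneg (h : ExtFixedPoint d lam f) : 0 ≤ lam := by
  by_contra! hlam
  have h1 := h.2.2.1 0 (by linarith)
  rw [h.2.2.2.1 0 hlam] at h1
  exact zero_ne_one h1

lemma intervalIntegral_eq_cavityIntegral (h : ExtFixedPoint d lam f) {x : ℝ} (hx : -x ≤ lam) :
    ∫ t in (-x)..lam, (x + t) ^ (d - 1) * f t = cavityIntegral d f x := by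
  rw [intervalIntegral.integral_of_le hx, cavityIntegral,
    setIntegral_eq_of_subset_of_forall_sdiff_eq_zero measurableSet_Ioi Ioc_subset_Ioi_self]
  rintro t ⟨ht, htlam⟩
  rw [h.2.2.2.1 t (lt_of_not_ge fun h' => htlam ⟨ht, h'⟩), mul_zero]

lemma eq_cavityMap (h : ExtFixedPoint d lam f) {x : ℝ} (hx : x ∈ Icc (-lam) lam) :
    f x = cavityMap d f x := by
  rw [← h.2.2.2.2 x hx, T, cavityMap,
    h.intervalIntegral_eq_cavityIntegral (by linarith [hx.1])]

lemma apply_zero (h : ExtFixedPoint d lam f) :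
    f 0 = exp (-(d * ∫ s in (0 : ℝ)..lam, s ^ (d - 1) * f s)) := by
  simpa [T] using (h.2.2.2.2 0 ⟨by linarith [h.lam_nonneg], h.lam_nonneg⟩).symm

lemma intervalIntegrable_kernel_mul (hd : 1 ≤ d) (h : ExtFixedPoint d lam f) (x a b : ℝ) :
    IntervalIntegrable (fun t => (x + t) ^ (d - 1) * f t) volume a b :=
  h.antitone.intervalIntegrable.continuousOn_mul (continuous_add_rpow hd x).continuousOn

lemma le_mul_exp_neg (hd : 1 < d) (h : ExtFixedPoint d lam f) {t : ℝ} (ht : t ∈ Icc 0 lam) :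
    f t ≤ f 0 * exp (-f 0 * t ^ d) := by
  have hleft : f 0 * (t ^ d / d) ≤ ∫ s in (-t)..0, (t + s) ^ (d - 1) * f s := by
    rw [← integral_add_rpow (by linarith) t, ← intervalIntegral.integral_const_mul]
    refine intervalIntegral.integral_mono_on (by linarith [ht.1])
      ((continuous_add_rpow hd.le t).intervalIntegrable _ _ |>.const_mul _)
      (h.intervalIntegrable_kernel_mul hd.le t _ _) fun s hs => ?_
    rw [mul_comm]
    exact mul_le_mul_of_nonneg_left (h.antitone hs.2) (rpow_nonneg (by linarith [hs.1]) _)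
  have hright : ∫ s in (0 : ℝ)..lam, s ^ (d - 1) * f s ≤
      ∫ s in (0 : ℝ)..lam, (t + s) ^ (d - 1) * f s := by
    refine intervalIntegral.integral_mono_on (ht.1.trans ht.2)
      (by simpa using h.intervalIntegrable_kernel_mul hd.le 0 0 lam)
      (h.intervalIntegrable_kernel_mul hd.le t _ _) fun s hs => ?_
    exact mul_le_mul_of_nonneg_right (rpow_le_rpow hs.1 (by linarith [ht.1]) (by linarith))
      (h.mem_Icc s).1
  calc f t = exp (-(d * ((∫ s in (-t)..0, (t + s) ^ (d - 1) * f s) +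
        ∫ s in (0 : ℝ)..lam, (t + s) ^ (d - 1) * f s))) := by
        rw [intervalIntegral.integral_add_adjacent_intervals
          (h.intervalIntegrable_kernel_mul hd.le t _ _)
          (h.intervalIntegrable_kernel_mul hd.le t _ _),
          ← h.2.2.2.2 t ⟨by linarith [ht.1, ht.2], ht.2⟩, T]
    _ ≤ exp (-(d * (f 0 * (t ^ d / d) + ∫ s in (0 : ℝ)..lam, s ^ (d - 1) * f s))) := by
        gcongr
    _ = f 0 * exp (-f 0 * t ^ d) := by
        rw [h.apply_zero, ← exp_add]
        congr 1
        field_simp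
        ring

lemma exp_neg_one_le (hd : 1 < d) (h : ExtFixedPoint d lam f) : exp (-1) ≤ f 0 := by
  set c := f 0 with hc
  have hd0 : 0 < d := by linarith
  have hcont : Continuous fun s : ℝ => s ^ (d - 1) * (c * exp (-c * s ^ d)) :=
    (Real.continuous_rpow_const (by linarith)).mul
      (continuous_const.mul (continuous_const.mul (Real.continuous_rpow_const hd0.le)).rexp)
  have hexplicit : ∫ s in (0 : ℝ)..lam, s ^ (d - 1) * (c * exp (-c * s ^ d)) =
      (1 - exp (-c * lam ^ d)) / d := by
    rw [intervalIntegral.integral_eq_sub_of_hasDerivAt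
      (f := fun s => -(1 / d) * exp (-c * s ^ d)) (fun s _ =>
        ((hasDerivAt_exp_neg_mul_rpow hd.le c s).const_mul _).congr_deriv (by field_simp))
      (hcont.intervalIntegrable _ _), zero_rpow hd0.ne', mul_zero, exp_zero]
    ring
  -- integrate `le_mul_exp_neg` against `s ^ (d - 1)` over `[0, λ]`
  have hcomparison : ∫ s in (0 : ℝ)..lam, s ^ (d - 1) * f s ≤ (1 - exp (-c * lam ^ d)) / d := by
    rw [← hexplicit]
    refine intervalIntegral.integral_mono_on h.lam_nonneg
      (by simpa using h.intervalIntegrable_kernel_mul hd.le 0 0 lam)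
      (hcont.intervalIntegrable _ _) fun s hs => ?_
    exact mul_le_mul_of_nonneg_left (h.le_mul_exp_neg hd hs) (rpow_nonneg hs.1 _)
  rw [hc, h.apply_zero, exp_le_exp, neg_le_neg_iff]
  calc d * ∫ s in (0 : ℝ)..lam, s ^ (d - 1) * f s ≤ d * ((1 - exp (-c * lam ^ d)) / d) := by
        gcongr
    _ ≤ 1 := by
        rw [mul_div_cancel₀ _ hd0.ne']
        linarith [exp_pos (-c * lam ^ d)]

lemma mem_Icc_cavityEnvelope (hd : 1 < d) (h : ExtFixedPoint d lam f) (t : ℝ) :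
    f t ∈ Icc 0 (cavityEnvelope d t) := by
  refine ⟨(h.mem_Icc t).1, ?_⟩
  rcases le_or_gt t 0 with ht | ht
  · rw [cavityEnvelope_of_nonpos (by linarith) ht]
    exact (h.mem_Icc t).2
  rcases le_or_gt t lam with htlam | htlam
  · rw [cavityEnvelope_of_nonneg ht.le]
    calc f t ≤ f 0 * exp (-f 0 * t ^ d) := h.le_mul_exp_neg hd ⟨ht.le, htlam⟩
      _ ≤ 1 * exp (-exp (-1) * t ^ d) := by
          gcongr
          · exact (h.mem_Icc 0).2
          · exact h.exp_neg_one_le hd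
      _ = exp (-exp (-1) * t ^ d) := one_mul _
  · rw [h.2.2.2.1 t htlam]
    exact (cavityEnvelope_pos t).le

end ExtFixedPoint

section Limits

variable {lam : ℕ → ℝ} {F : ℕ → ℝ → ℝ}

lemma mem_Icc_cavityEnvelope_of_tendsto (hd : 1 < d) (hF : ∀ n, ExtFixedPoint d (lam n) (F n))
    {x y : ℝ} (hlim : Tendsto (fun n => F n x) atTop (𝓝 y)) : y ∈ Icc 0 (cavityEnvelope d x) :=
  isClosed_Icc.mem_of_tendsto hlim
    (Eventually.of_forall fun n => (hF n).mem_Icc_cavityEnvelope hd x)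

lemma tendsto_cavityMap_of_ae_tendsto (hd : 1 < d) (hF : ∀ n, ExtFixedPoint d (lam n) (F n))
    (hlam : Tendsto lam atTop atTop) (hlim : ∀ᵐ t, Tendsto (fun n => F n t) atTop (𝓝 (f t)))
    (x : ℝ) : Tendsto (fun n => F n x) atTop (𝓝 (cavityMap d f x)) := by
  have hI := tendsto_cavityIntegral (x := x) hd.le (fun n => (hF n).antitone.measurable)
    (fun n => (hF n).mem_Icc_cavityEnvelope hd) hlim
  refine ((hI.const_mul d).neg.rexp).congr' ?_
  filter_upwards [hlam.eventually_ge_atTop |x|] with n hn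
  exact ((hF n).eq_cavityMap ⟨by linarith [neg_abs_le x], by linarith [le_abs_self x]⟩).symm

lemma solvesCavity_of_tendsto (hd : 1 < d) (hF : ∀ n, ExtFixedPoint d (lam n) (F n))
    (hlam : Tendsto lam atTop atTop) (hlim : ∀ x, Tendsto (fun n => F n x) atTop (𝓝 (f x))) :
    SolvesCavity d f := by
  have hfm : Measurable f :=
    measurable_of_tendsto_metrizable (fun n => (hF n).antitone.measurable) (tendsto_pi_nhds.2 hlim)
  have hf : ∀ t, f t ∈ Icc 0 (cavityEnvelope d t) := fun t =>
    mem_Icc_cavityEnvelope_of_tendsto hd hF (hlim t)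
  refine ⟨hfm, fun x => ⟨(hf x).1, (hf x).2.trans (cavityEnvelope_le_one x)⟩,
    integrableOn_kernel_mul hd.le hfm hf, fun x => ?_⟩
  exact tendsto_nhds_unique (hlim x)
    (tendsto_cavityMap_of_ae_tendsto hd hF hlam (Eventually.of_forall hlim) x)

end Limits

lemma exists_subseq_tendsto_of_mem_Icc {α : Type*} [Countable α] {a b : ℝ} (F : ℕ → α → ℝ)
    (hF : ∀ n x, F n x ∈ Icc a b) :
    ∃ φ : ℕ → ℕ, StrictMono φ ∧ ∃ g : α → ℝ, ∀ x, Tendsto (fun k => F (φ k) x) atTop (𝓝 (g x)) := by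
  obtain ⟨g, -, φ, hφ, hg⟩ := isCompact_univ.tendsto_subseq
    (x := fun n x => (⟨F n x, hF n x⟩ : Icc a b)) fun n => mem_univ _
  exact ⟨φ, hφ, fun x => g x, fun x => (continuous_subtype_val.tendsto _).comp
    (tendsto_pi_nhds.1 hg x)⟩

noncomputable def ratRightLimit (g : ℚ → ℝ) (x : ℝ) : ℝ :=
  sSup (g '' {q : ℚ | x < q})

section RatRightLimit

variable {g : ℚ → ℝ}

lemma le_ratRightLimit (hg : BddAbove (range g)) {x : ℝ} {q : ℚ} (hq : x < q) :
    g q ≤ ratRightLimit g x :=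
  le_csSup (hg.mono (image_subset_range _ _)) ⟨q, hq, rfl⟩

lemma ratRightLimit_le {x y : ℝ} (h : ∀ q : ℚ, x < q → g q ≤ y) : ratRightLimit g x ≤ y := by
  obtain ⟨q, hq⟩ := exists_rat_gt x
  exact csSup_le ⟨g q, q, hq, rfl⟩ (forall_mem_image.2 h)

lemma antitone_ratRightLimit (hg : BddAbove (range g)) : Antitone (ratRightLimit g) :=
  fun _ _ hxy => ratRightLimit_le fun _ hq => le_ratRightLimit hg (hxy.trans_lt hq)

/-- The key step of Helly's selection theorem. -/
lemma tendsto_ratRightLimit {ι : Type*} {l : Filter ι} {F : ι → ℝ → ℝ}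
    (hF : ∀ i, Antitone (F i)) (hg : BddAbove (range g))
    (hlim : ∀ q : ℚ, Tendsto (fun i => F i q) l (𝓝 (g q))) {x : ℝ}
    (hx : ContinuousAt (ratRightLimit g) x) :
    Tendsto (fun i => F i x) l (𝓝 (ratRightLimit g x)) := by
  refine tendsto_order.2 ⟨fun y hy => ?_, fun y hy => ?_⟩
  · obtain ⟨-, ⟨q, hq, rfl⟩, hyq⟩ := exists_lt_of_lt_csSup
      (by obtain ⟨q, hq⟩ := exists_rat_gt x; exact ⟨g q, q, hq, rfl⟩) hy
    filter_upwards [(hlim q).eventually (lt_mem_nhds hyq)] with i hi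
    exact hi.trans_le (hF i hq.le)
  · obtain ⟨x', hx'x, hx'⟩ := (hx.eventually (gt_mem_nhds hy)).exists_lt
    obtain ⟨p, hx'p, hpx⟩ := exists_rat_btwn hx'x
    filter_upwards [(hlim p).eventually
      (gt_mem_nhds ((le_ratRightLimit hg hx'p).trans_lt hx'))] with i hi
    exact (hF i hpx.le).trans_lt hi

end RatRightLimit

section Polya

variable {ι : Type*} {l : Filter ι} {F : ι → ℝ → ℝ}

lemma tendstoLocallyUniformly_of_antitone_of_tendsto (hF : ∀ i, Antitone (F i))
    (hf : Continuous f) (hlim : ∀ x, Tendsto (fun i => F i x) l (𝓝 (f x))) :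
    TendstoLocallyUniformly F f l := by
  refine Metric.tendstoLocallyUniformly_iff.2 fun ε hε x => ?_
  obtain ⟨δ, hδ, hfδ⟩ := Metric.continuousAt_iff.1 hf.continuousAt (ε / 3) (by positivity)
  have hnear : ∀ y, |y - x| < δ → |f y - f x| < ε / 3 := fun y hy => hfδ hy
  refine ⟨Ioo (x - δ / 2) (x + δ / 2), Ioo_mem_nhds (by linarith) (by linarith), ?_⟩
  have hε3 : 0 < ε / 3 := by positivity
  filter_upwards [(hlim (x - δ / 2)).eventually (Metric.ball_mem_nhds _ hε3),
    (hlim (x + δ / 2)).eventually (Metric.ball_mem_nhds _ hε3)]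
    with i hl hr y hy
  simp only [Real.dist_eq] at hl hr ⊢
  have h1 := hnear (x - δ / 2) (by rw [abs_lt]; constructor <;> linarith)
  have h2 := hnear (x + δ / 2) (by rw [abs_lt]; constructor <;> linarith)
  have h3 := hnear y (by rw [abs_lt]; constructor <;> linarith [hy.1, hy.2])
  have h4 := hF i hy.1.le
  have h5 := hF i hy.2.le
  rw [abs_lt] at hl hr h1 h2 h3 ⊢
  constructor <;> linarith

/-- Pólya's theorem, for antitone functions. -/
lemma tendstoUniformly_of_antitone_of_tendsto [l.NeBot] {a b : ℝ} (hF : ∀ i, Antitone (F i))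
    (hFab : ∀ i x, F i x ∈ Icc a b) (hf : Continuous f) (hbot : Tendsto f atBot (𝓝 b))
    (htop : Tendsto f atTop (𝓝 a)) (hlim : ∀ x, Tendsto (fun i => F i x) l (𝓝 (f x))) :
    TendstoUniformly F f l := by
  have hfab : ∀ x, f x ∈ Icc a b := fun x =>
    isClosed_Icc.mem_of_tendsto (hlim x) (Eventually.of_forall fun i => hFab i x)
  refine Metric.tendstoUniformly_iff.2 fun ε hε => ?_
  obtain ⟨L, hL⟩ := eventually_atBot.1 (hbot.eventually (lt_mem_nhds (by linarith : b - ε / 2 < b)))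
  obtain ⟨R, hR⟩ := eventually_atTop.1 (htop.eventually (gt_mem_nhds (by linarith : a < a + ε / 2)))
  have hmid := (tendstoLocallyUniformlyOn_iff_tendstoUniformlyOn_of_compact
    (isCompact_Icc (a := min L R) (b := R))).1
      ((tendstoLocallyUniformly_of_antitone_of_tendsto hF hf hlim).tendstoLocallyUniformlyOn)
  filter_upwards [Metric.tendstoUniformlyOn_iff.1 hmid ε hε,
    (hlim (min L R)).eventually (Metric.ball_mem_nhds _ (by positivity : 0 < ε / 2)),
    (hlim R).eventually (Metric.ball_mem_nhds _ (by positivity : 0 < ε / 2))] with i hi hl hr x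
  rcases lt_or_ge x (min L R) with hx | hx
  · have hFx := hF i hx.le
    have hfx := hL x (hx.le.trans (min_le_left L R))
    have hfL := hL _ (min_le_left L R)
    simp only [Real.dist_eq, abs_lt] at hl
    rw [Real.dist_eq, abs_lt]
    constructor <;> linarith [(hfab x).2, (hFab i x).2]
  rcases le_or_gt x R with hx' | hx'
  · exact hi x ⟨hx, hx'⟩
  · have hFx := hF i hx'.le
    have hfx := hR x hx'.le
    have hfR := hR R le_rfl
    simp only [Real.dist_eq, abs_lt] at hr
    rw [Real.dist_eq, abs_lt]
    constructor <;> linarith [(hfab x).1, (hFab i x).1]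

end Polya

lemma ExtFixedPoint.exists_subseq_tendsto_cavityMap {lam : ℕ → ℝ} {F : ℕ → ℝ → ℝ} (hd : 1 < d)
    (hF : ∀ n, ExtFixedPoint d (lam n) (F n)) (hlam : Tendsto lam atTop atTop) :
    ∃ φ : ℕ → ℕ, StrictMono φ ∧ ∃ G : ℝ → ℝ, Measurable G ∧
      (∀ t, G t ∈ Icc 0 (cavityEnvelope d t)) ∧
      ∀ x, Tendsto (fun k => F (φ k) x) atTop (𝓝 (cavityMap d G x)) := by
  obtain ⟨φ, hφ, g, hg⟩ :=
    exists_subseq_tendsto_of_mem_Icc (fun n (q : ℚ) => F n q) fun n q => (hF n).mem_Icc q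
  have hg_mem : ∀ q : ℚ, g q ∈ Icc 0 (cavityEnvelope d q) := fun q =>
    mem_Icc_cavityEnvelope_of_tendsto hd (fun k => hF (φ k)) (hg q)
  have hbdd : BddAbove (range g) :=
    ⟨1, forall_mem_range.2 fun q => (hg_mem q).2.trans (cavityEnvelope_le_one _)⟩
  have hG_anti := antitone_ratRightLimit hbdd
  have hG_mem : ∀ t, ratRightLimit g t ∈ Icc 0 (cavityEnvelope d t) := fun t => by
    obtain ⟨q, hq⟩ := exists_rat_gt t
    exact ⟨(hg_mem q).1.trans (le_ratRightLimit hbdd hq), ratRightLimit_le fun q hq =>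
      (hg_mem q).2.trans (antitone_cavityEnvelope (by linarith) hq.le)⟩
  have hae : ∀ᵐ t, Tendsto (fun k => F (φ k) t) atTop (𝓝 (ratRightLimit g t)) := by
    refine (measure_eq_zero_iff_ae_notMem.1
      (hG_anti.countable_not_continuousAt.measure_zero volume)).mono fun t ht => ?_
    exact tendsto_ratRightLimit (fun k => (hF (φ k)).antitone) hbdd hg (not_not.1 ht)
  exact ⟨φ, hφ, ratRightLimit g, hG_anti.measurable, hG_mem,
    tendsto_cavityMap_of_ae_tendsto hd (fun k => hF (φ k)) (hlam.comp hφ.tendsto_atTop) hae⟩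

end

theorem truncated_fixedPoints_relatively_compact_general (d : ℝ) (hd : 1 < d)
    (lam : ℕ → ℝ) (hlim : Tendsto lam atTop atTop)
    (F : ℕ → ℝ → ℝ) (hF : ∀ n, ExtFixedPoint d (lam n) (F n)) :
    (∃ φ : ℕ → ℕ, StrictMono φ ∧ ∃ f : ℝ → ℝ,
      Continuous f ∧ Antitone f ∧ (∀ x, f x ∈ Icc (0 : ℝ) 1) ∧
      TendstoUniformly (fun k => F (φ k)) f atTop ∧ SolvesCavity d f) ∧
    (∀ φ : ℕ → ℕ, StrictMono φ → ∀ f : ℝ → ℝ,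
      Continuous f → Antitone f → (∀ x, f x ∈ Icc (0 : ℝ) 1) →
      TendstoUniformly (fun k => F (φ k)) f atTop → SolvesCavity d f) := by
  have hsub : ∀ φ : ℕ → ℕ, StrictMono φ → Tendsto (fun k => lam (φ k)) atTop atTop :=
    fun φ hφ => hlim.comp hφ.tendsto_atTop
  refine ⟨?_, fun φ hφ f _ _ _ hunif =>
    solvesCavity_of_tendsto hd (fun k => hF (φ k)) (hsub φ hφ) hunif.tendsto_at⟩
  obtain ⟨φ, hφ, G, hGm, hG, hconv⟩ := ExtFixedPoint.exists_subseq_tendsto_cavityMap hd hF hlim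
  have hsolves := solvesCavity_of_tendsto hd (fun k => hF (φ k)) (hsub φ hφ) hconv
  have hcont := continuous_cavityMap hd hGm hG
  refine ⟨φ, hφ, cavityMap d G, hcont,
    fun x y hxy => le_of_tendsto_of_tendsto' (hconv y) (hconv x) fun k => (hF (φ k)).antitone hxy,
    hsolves.2.1, ?_, hsolves⟩
  refine tendstoUniformly_of_antitone_of_tendsto (fun k => (hF (φ k)).antitone)
    (fun k => (hF (φ k)).mem_Icc) hcont (tendsto_cavityMap_atBot hd hGm hG) ?_ hconv
  have hle := fun x => mem_Icc_cavityEnvelope_of_tendsto hd (fun k => hF (φ k)) (hconv x)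
  exact tendsto_of_tendsto_of_tendsto_of_le_of_le tendsto_const_nhds
    (tendsto_cavityEnvelope_atTop (by linarith)) (fun x => (hle x).1) fun x => (hle x).2

/-- relative compactness: every sequence `λ_n → ∞` admits a
subsequence along which the extended fixed points converge uniformly on `ℝ` to a
continuous non-increasing `f : ℝ → [0,1]`, and every such sub-sequential uniform
limit solves the un-truncated cavity equation. -/
theorem truncated_fixedPoints_relatively_compact (d : ℝ) (hd : 1 < d)
    (lam : ℕ → ℝ) (hpos : ∀ n, 0 < lam n) (hlim : Tendsto lam atTop atTop)
    (F : ℕ → ℝ → ℝ) (hF : ∀ n, ExtFixedPoint d (lam n) (F n)) :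
    (∃ φ : ℕ → ℕ, StrictMono φ ∧ ∃ f : ℝ → ℝ,
      Continuous f ∧ Antitone f ∧ (∀ x, f x ∈ Icc (0 : ℝ) 1) ∧
      TendstoUniformly (fun k => F (φ k)) f atTop ∧ SolvesCavity d f) ∧
    (∀ φ : ℕ → ℕ, StrictMono φ → ∀ f : ℝ → ℝ,
      Continuous f → Antitone f → (∀ x, f x ∈ Icc (0 : ℝ) 1) →
      TendstoUniformly (fun k => F (φ k)) f atTop → SolvesCavity d f) :=
  truncated_fixedPoints_relatively_compact_general d hd lam hlim F hF
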